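/- arXiv:2404.12556 — 3 statements merged into one kernel-verified Lean document; each statement's English description precedes it below -/
import Mathlib

section
/- If δ is a random variable with E[δ] = 0 and |δ| ≤ u < 1 almost surely, then |E[log(1+δ)]| ≤ u²/(1-u). -/
/-!
On `(-1, ∞)` the chord bounds `x / (1 + x) ≤ log (1 + x) ≤ x` put `log (1 + x)` within
`x² / (1 + x)` of `x`, which for `|x| ≤ u < 1` is at most `u² / (1 - u)`. Since `δ` has mean zero,
`E[log (1 + δ)] = E[log (1 + δ) - δ]`, and the pointwise bound passes to the expectation.
-/

open MeasureTheory

namespace Real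

lemma abs_log_one_add_sub_self_le {x : ℝ} (hx : -1 < x) :
    |log (1 + x) - x| ≤ x ^ 2 / (1 + x) := by
  have hpos : 0 < 1 + x := by linarith
  have hupper : log (1 + x) ≤ x := by linarith [log_le_sub_one_of_pos hpos]
  have hlower : x / (1 + x) ≤ log (1 + x) := by
    have h := one_sub_inv_le_log_of_pos hpos
    rwa [show 1 - (1 + x)⁻¹ = x / (1 + x) by field_simp; ring] at h
  have hgap : x - x / (1 + x) = x ^ 2 / (1 + x) := by field_simp; ring
  rw [abs_sub_comm, abs_of_nonneg (by linarith)]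
  linarith

lemma abs_log_one_add_sub_self_le_of_abs_le {x u : ℝ} (hu : u < 1) (hx : |x| ≤ u) :
    |log (1 + x) - x| ≤ u ^ 2 / (1 - u) := by
  obtain ⟨hxl, hxu⟩ := abs_le.mp hx
  calc |log (1 + x) - x| ≤ x ^ 2 / (1 + x) := abs_log_one_add_sub_self_le (by linarith)
    _ ≤ u ^ 2 / (1 - u) :=
      div_le_div₀ (sq_nonneg u) (sq_le_sq' hxl hxu) (by linarith) (by linarith)

end Real

lemma abs_integral_le_of_integral_eq_zero_of_abs_sub_le {Ω : Type*} [MeasurableSpace Ω] {P : Measure Ω}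
    [IsProbabilityMeasure P] {f g : Ω → ℝ} {C : ℝ} (hg : Integrable g P)
    (hg0 : ∫ ω, g ω ∂P = 0) (hfg : AEStronglyMeasurable (fun ω ↦ f ω - g ω) P)
    (hC : ∀ᵐ ω ∂P, |f ω - g ω| ≤ C) :
    |∫ ω, f ω ∂P| ≤ C := by
  simp_rw [← Real.norm_eq_abs] at hC ⊢
  have hsplit : ∫ ω, f ω ∂P = ∫ ω, (f ω - g ω) ∂P := by
    simpa [hg0] using integral_add (Integrable.of_bound hfg C hC) hg
  simpa [hsplit] using norm_integral_le_of_norm_le_const hC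

theorem abs_integral_log_one_add_le_general {Ω : Type*} [MeasurableSpace Ω]
    (P : Measure Ω) [IsProbabilityMeasure P] (u : ℝ) (hu1 : u < 1)
    (δ : Ω → ℝ) (hmeas : Measurable δ) (hmean : ∫ ω, δ ω ∂P = 0)
    (hbd : ∀ᵐ ω ∂P, |δ ω| ≤ u) :
    |∫ ω, Real.log (1 + δ ω) ∂P| ≤ u ^ 2 / (1 - u) := by
  have hδ : Integrable δ P := Integrable.of_bound hmeas.aestronglyMeasurable u hbd
  refine abs_integral_le_of_integral_eq_zero_of_abs_sub_le hδ hmean (by fun_prop) ?_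
  filter_upwards [hbd] with ω hω
  exact Real.abs_log_one_add_sub_self_le_of_abs_le hu1 hω

/-- If `E[δ] = 0` and `|δ| ≤ u < 1` a.s., then `|E[log(1+δ)]| ≤ u²/(1-u)`. -/
theorem abs_integral_log_one_add_le {Ω : Type*} [MeasurableSpace Ω]
    (P : Measure Ω) [IsProbabilityMeasure P] (u : ℝ) (hu0 : 0 < u) (hu1 : u < 1)
    (δ : Ω → ℝ) (hmeas : Measurable δ) (hmean : ∫ ω, δ ω ∂P = 0)
    (hbd : ∀ᵐ ω ∂P, |δ ω| ≤ u) :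
    |∫ ω, Real.log (1 + δ ω) ∂P| ≤ u ^ 2 / (1 - u) :=
  abs_integral_log_one_add_le_general P u hu1 δ hmeas hmean hbd
end

section
/- If δ is uniformly distributed on [-u, u] with 0 < u < 1, then Var[log(1+δ)] = (4u² + (u²-1)·[log²(1-u) - 2·log(1-u)·log(1+u) + log²(1+u)]) / (4u²). -/
open Real Set intervalIntegral

/-! After the substitution `y = 1 + x` both moments are elementary integrals over `[1-u, 1+u]`:
`y log y - y` and `y log² y - 2 y log y + 2 y` are antiderivatives of `log` and `log²`. -/

theorem hasDerivAt_mul_log_sq_sub {x : ℝ} (hx : x ≠ 0) :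
    HasDerivAt (fun y => y * log y ^ 2 - 2 * y * log y + 2 * y) (log x ^ 2) x := by
  have hlog := hasDerivAt_log hx
  refine ((((hasDerivAt_id' x).mul (hlog.fun_pow 2)).sub
    (((hasDerivAt_id' x).const_mul 2).mul hlog)).add
      ((hasDerivAt_id' x).const_mul 2)).congr_deriv ?_
  field_simp
  ring

theorem integral_log_sq {a b : ℝ} (h : (0 : ℝ) ∉ uIcc a b) :
    ∫ x in a..b, log x ^ 2 =
      (b * log b ^ 2 - 2 * b * log b + 2 * b) - (a * log a ^ 2 - 2 * a * log a + 2 * a) := by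
  have hne : ∀ x ∈ uIcc a b, x ≠ 0 := fun x hx hx0 => h (hx0 ▸ hx)
  refine integral_eq_sub_of_hasDerivAt (fun x hx => hasDerivAt_mul_log_sq_sub (hne x hx)) ?_
  exact ((continuousOn_log.mono fun x hx => hne x hx).pow 2).intervalIntegrable

/-- For `δ ~ Uniform[-u,u]` with `0 < u < 1`, the variance of `log(1+δ)`,
computed as `E[X²] - (E[X])²` with expectations as integrals against the uniform
density `1/(2u)` on `[-u,u]`, equals
`(4u² + (u²-1)·[log²(1-u) - 2 log(1-u) log(1+u) + log²(1+u)]) / (4u²)`. -/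
theorem uniform_var_log_one_add (u : ℝ) (hu0 : 0 < u) (hu1 : u < 1) :
    (1 / (2 * u)) * (∫ x in (-u)..u, (Real.log (1 + x)) ^ 2) -
      ((1 / (2 * u)) * (∫ x in (-u)..u, Real.log (1 + x))) ^ 2 =
      (4 * u ^ 2 + (u ^ 2 - 1) *
        ((Real.log (1 - u)) ^ 2 - 2 * Real.log (1 - u) * Real.log (1 + u) +
          (Real.log (1 + u)) ^ 2)) / (4 * u ^ 2) := by
  have hshift (f : ℝ → ℝ) : ∫ x in (-u)..u, f (1 + x) = ∫ y in (1 - u)..(1 + u), f y := by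
    simpa only [sub_eq_add_neg] using integral_comp_add_left f 1 (a := -u) (b := u)
  have hzero : (0 : ℝ) ∉ uIcc (1 - u) (1 + u) := by
    rw [uIcc_of_le (by linarith)]
    exact fun h => by linarith [h.1]
  rw [hshift (fun y => log y ^ 2), hshift log, integral_log_sq hzero, integral_log]
  field_simp
  ring
end

section
/- Let δ_1,…,δ_n be i.i.d. real random variables with |δ_i| ≤ u < 1 almost surely and ρ_i ∈ {1,-1}. Assume Bernstein's inequality: for S_n = Σ ρ_i·log(1+δ_i), P(|S_n - E[S_n]| ≥ t) ≤ 2·exp(-t²/(2(nσ² + ct/3))) for all t > 0, where |log(1+δ_i)| ≤ c and σ² = Var[log(1+δ_i)]. Then for any ζ ∈ [0,1), with probability at least ζ, ∏_{i=1}^n (1+δ_i)^{ρ_i} = 1 + θ with |θ| ≤ exp(t₊ + n|μ|) - 1, where μ = E[log(1+δ_i)] and t₊ = (1/3)·(-c·log((1-ζ)/2) + sqrt(c²·log²((1-ζ)/2) - 18n·log((1-ζ)/2)·σ²)). -/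
/-!
Since `1 + δ_i > 0`, the product is `exp S` with `S = ∑ ρ_i log (1 + δ_i)`, and
`|exp S - 1| ≤ exp |S| - 1`, where `|S| ≤ |S - E S| + n |μ|`. With `L = log ((1 - ζ) / 2)`,
`t₊` is the positive root of `t² = -2L (nσ² + ct/3)`, so at `t = t₊` Bernstein's bound is
`2 e^L = 1 - ζ`: outside an event of probability at most `1 - ζ` we have `|S - E S| < t₊`.
-/

open MeasureTheory ProbabilityTheory

theorem Real.abs_exp_sub_one_le_exp_abs_sub_one (x : ℝ) :
    |Real.exp x - 1| ≤ Real.exp |x| - 1 := by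
  rcases le_total 0 x with hx | hx
  · rw [abs_of_nonneg hx, abs_of_nonneg (sub_nonneg.2 (Real.one_le_exp hx))]
  · have hexp_neg : 0 ≤ Real.exp (-x) - 1 := sub_nonneg.2 (Real.one_le_exp (neg_nonneg.2 hx))
    rw [abs_of_nonpos hx, abs_of_nonpos (sub_nonpos.2 (Real.exp_le_one_iff.2 hx))]
    calc -(Real.exp x - 1) = Real.exp x * (Real.exp (-x) - 1) := by
          rw [mul_sub, ← Real.exp_add, add_neg_cancel, Real.exp_zero, mul_one, neg_sub]
      _ ≤ 1 * (Real.exp (-x) - 1) := by gcongr; exact Real.exp_le_one_iff.2 hx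
      _ = Real.exp (-x) - 1 := one_mul _

theorem Real.prod_zpow_eq_exp_sum_mul_log {ι : Type*} (s : Finset ι) {x : ι → ℝ}
    (hx : ∀ i ∈ s, 0 < x i) (ρ : ι → ℤ) :
    ∏ i ∈ s, x i ^ ρ i = Real.exp (∑ i ∈ s, (ρ i : ℝ) * Real.log (x i)) := by
  rw [Real.exp_sum]
  refine Finset.prod_congr rfl fun i hi => ?_
  rw [← Real.rpow_intCast, Real.rpow_def_of_pos (hx i hi), mul_comm]

theorem Real.abs_prod_zpow_sub_one_le {ι : Type*} (s : Finset ι) {x : ι → ℝ}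
    (hx : ∀ i ∈ s, 0 < x i) (ρ : ι → ℤ) {r : ℝ}
    (h : |∑ i ∈ s, (ρ i : ℝ) * Real.log (x i)| ≤ r) :
    |∏ i ∈ s, x i ^ ρ i - 1| ≤ Real.exp r - 1 := by
  rw [Real.prod_zpow_eq_exp_sum_mul_log s hx]
  exact (Real.abs_exp_sub_one_le_exp_abs_sub_one _).trans (by gcongr)

theorem abs_sum_sign_mul_le {ι : Type*} (s : Finset ι) {ρ : ι → ℤ}
    (hρ : ∀ i ∈ s, ρ i = 1 ∨ ρ i = -1) (m : ℝ) :
    |∑ i ∈ s, (ρ i : ℝ) * m| ≤ s.card * |m| := by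
  calc |∑ i ∈ s, (ρ i : ℝ) * m| ≤ ∑ i ∈ s, |(ρ i : ℝ) * m| := Finset.abs_sum_le_sum_abs _ _
    _ = ∑ _i ∈ s, |m| := Finset.sum_congr rfl fun i hi => by
        rcases hρ i hi with h | h <;> simp [h]
    _ = s.card * |m| := by simp

theorem MeasureTheory.ofReal_le_measure_of_measure_compl_le {Ω : Type*} [MeasurableSpace Ω]
    {P : Measure Ω} [IsProbabilityMeasure P] {s : Set Ω} {ζ : ℝ} (hζ : ζ ≤ 1)
    (h : P sᶜ ≤ ENNReal.ofReal (1 - ζ)) : ENNReal.ofReal ζ ≤ P s := by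
  have hcover : 1 ≤ P s + P sᶜ := by
    simpa [Set.union_compl_self] using measure_union_le (μ := P) s sᶜ
  calc ENNReal.ofReal ζ = 1 - ENNReal.ofReal (1 - ζ) := by
        rw [← ENNReal.ofReal_one, ← ENNReal.ofReal_sub _ (by linarith), sub_sub_cancel]
    _ ≤ P s := tsub_le_iff_right.2 (hcover.trans (add_le_add le_rfl h))

/-- The positive root `t` of `t² = -2L (V + ct/3)`, i.e. of `-t² / (2 (V + ct/3)) = L`. -/
noncomputable def bernsteinRadius (c V L : ℝ) : ℝ :=
  (1 / 3) * (-c * L + √(c ^ 2 * L ^ 2 - 18 * V * L))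

section bernsteinRadius

variable {c V L : ℝ}

theorem bernsteinRadius_pos (hc : 0 < c) (hL : L < 0) : 0 < bernsteinRadius c V L := by
  have : 0 < -c * L := by nlinarith
  unfold bernsteinRadius
  positivity

theorem bernsteinRadius_sq (hV : 0 ≤ V) (hL : L < 0) :
    bernsteinRadius c V L ^ 2 = -2 * L * (V + c * bernsteinRadius c V L / 3) := by
  have hdisc : 0 ≤ c ^ 2 * L ^ 2 - 18 * V * L := by nlinarith [sq_nonneg (c * L)]
  unfold bernsteinRadius
  nlinarith [Real.sq_sqrt hdisc]

theorem neg_sq_div_bernsteinRadius (hc : 0 < c) (hV : 0 ≤ V) (hL : L < 0) :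
    -bernsteinRadius c V L ^ 2 / (2 * (V + c * bernsteinRadius c V L / 3)) = L := by
  have := bernsteinRadius_pos (V := V) hc hL
  rw [bernsteinRadius_sq hV hL, div_eq_iff (by positivity)]
  ring

end bernsteinRadius

theorem vibea_general {Ω : Type*} [MeasurableSpace Ω]
    (P : Measure Ω) [IsProbabilityMeasure P] (n : ℕ)
    (u : ℝ) (hu1 : u < 1)
    (δ : Fin n → Ω → ℝ)
    (hbd : ∀ i, ∀ᵐ ω ∂P, |δ i ω| ≤ u)
    (ρ : Fin n → ℤ) (hρ : ∀ i, ρ i = 1 ∨ ρ i = -1)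
    (c m σ2 : ℝ) (hc : 0 < c)
    (hvar : ∀ i, variance (fun ω => Real.log (1 + δ i ω)) P = σ2)
    (hBernstein : ∀ t : ℝ, 0 < t →
      P {ω | t ≤ |(∑ i, (ρ i : ℝ) * Real.log (1 + δ i ω)) -
          (∑ i : Fin n, (ρ i : ℝ) * m)|} ≤
        ENNReal.ofReal (2 * Real.exp (-t ^ 2 / (2 * (n * σ2 + c * t / 3)))))
    (ζ : ℝ) (hζ0 : 0 ≤ ζ) (hζ1 : ζ < 1) :
    ENNReal.ofReal ζ ≤
      P {ω | |(∏ i, (1 + δ i ω) ^ (ρ i)) - 1| ≤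
        Real.exp ((1 / 3) * (-c * Real.log ((1 - ζ) / 2) +
          Real.sqrt (c ^ 2 * (Real.log ((1 - ζ) / 2)) ^ 2 -
            18 * n * Real.log ((1 - ζ) / 2) * σ2)) + n * |m|) - 1} := by
  set L := Real.log ((1 - ζ) / 2)
  have hL : L < 0 := Real.log_neg (by linarith) (by linarith)
  have hV : 0 ≤ n * σ2 := by
    have : n * σ2 = ∑ i : Fin n, variance (fun ω => Real.log (1 + δ i ω)) P := by simp [hvar]
    exact this ▸ Finset.sum_nonneg fun i _ => variance_nonneg _ _
  have ht : (1 / 3) * (-c * L + √(c ^ 2 * L ^ 2 - 18 * n * L * σ2)) =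
      bernsteinRadius c (n * σ2) L := by
    unfold bernsteinRadius; ring_nf
  rw [ht]
  set t := bernsteinRadius c (n * σ2) L
  have hBern := hBernstein t (bernsteinRadius_pos hc hL)
  rw [neg_sq_div_bernsteinRadius hc hV hL, Real.exp_log (by linarith),
    mul_div_cancel₀ _ two_ne_zero] at hBern
  refine ofReal_le_measure_of_measure_compl_le hζ1.le ((measure_mono_ae ?_).trans hBern)
  filter_upwards [ae_all_iff.2 hbd] with ω hω hbad
  by_contra hdev
  replace hdev := not_le.1 hdev
  refine hbad (Real.abs_prod_zpow_sub_one_le _ (fun i _ => ?_) ρ ?_)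
  · linarith [neg_abs_le (δ i ω), hω i]
  · have hM := abs_sum_sign_mul_le Finset.univ (fun i _ => hρ i) m
    simp only [Finset.card_univ, Fintype.card_fin] at hM
    linarith [abs_sub_abs_le_abs_sub (∑ i, (ρ i : ℝ) * Real.log (1 + δ i ω)) (∑ i, (ρ i : ℝ) * m)]

/-- Variance-informed backward error analysis (VIBEA).  Let `δ_1,…,δ_n` be
i.i.d. with `|δ_i| ≤ u < 1` a.s., `ρ_i = ±1`, `|log(1+δ_i)| ≤ c` a.s.,
common mean `m = E[log(1+δ_i)]` and variance `σ² = Var[log(1+δ_i)]`, and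
assume Bernstein's inequality for `S_n = Σ ρ_i log(1+δ_i)`.  Then for any
`ζ ∈ [0,1)`, with probability at least `ζ`,
`|∏ (1+δ_i)^(ρ_i) - 1| ≤ exp(t₊ + n|m|) - 1`. -/
theorem vibea {Ω : Type*} [MeasurableSpace Ω]
    (P : Measure Ω) [IsProbabilityMeasure P] (n : ℕ) (hn : 1 ≤ n)
    (u : ℝ) (hu0 : 0 < u) (hu1 : u < 1)
    (δ : Fin n → Ω → ℝ) (hmeas : ∀ i, Measurable (δ i))
    (hindep : iIndepFun δ P)
    (hiid : ∀ i j, IdentDistrib (δ i) (δ j) P P)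
    (hbd : ∀ i, ∀ᵐ ω ∂P, |δ i ω| ≤ u)
    (ρ : Fin n → ℤ) (hρ : ∀ i, ρ i = 1 ∨ ρ i = -1)
    (c m σ2 : ℝ) (hc : 0 < c)
    (hcbd : ∀ i, ∀ᵐ ω ∂P, |Real.log (1 + δ i ω)| ≤ c)
    (hmean : ∀ i, ∫ ω, Real.log (1 + δ i ω) ∂P = m)
    (hvar : ∀ i, variance (fun ω => Real.log (1 + δ i ω)) P = σ2)
    (hBernstein : ∀ t : ℝ, 0 < t →
      P {ω | t ≤ |(∑ i, (ρ i : ℝ) * Real.log (1 + δ i ω)) -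
          (∑ i : Fin n, (ρ i : ℝ) * m)|} ≤
        ENNReal.ofReal (2 * Real.exp (-t ^ 2 / (2 * (n * σ2 + c * t / 3)))))
    (ζ : ℝ) (hζ0 : 0 ≤ ζ) (hζ1 : ζ < 1) :
    ENNReal.ofReal ζ ≤
      P {ω | |(∏ i, (1 + δ i ω) ^ (ρ i)) - 1| ≤
        Real.exp ((1 / 3) * (-c * Real.log ((1 - ζ) / 2) +
          Real.sqrt (c ^ 2 * (Real.log ((1 - ζ) / 2)) ^ 2 -
            18 * n * Real.log ((1 - ζ) / 2) * σ2)) + n * |m|) - 1} :=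
  vibea_general P n u hu1 δ hbd ρ hρ c m σ2 hc hvar hBernstein ζ hζ0 hζ1
end
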